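/- arXiv:2508.03887 — 5 statements merged into one kernel-verified Lean document; each statement's English description precedes it below -/
import Mathlib

section
/- Let n > 1 and let K, L ⊆ ℝⁿ be nonempty closed convex sets whose cross covariogram g = g_{K,L} satisfies 0 < g(a) < ∞ for some a ∈ ℝⁿ. Then g^{1/n} is concave on the convex set K + (−L) = {x : K ∩ (L + x) ≠ ∅}: for all x₀, x₁ ∈ K + (−L) and all t ∈ [0,1], g((1−t)x₀ + t x₁)^{1/n} ≥ (1−t) g(x₀)^{1/n} + t g(x₁)^{1/n}. -/
/-!
For `0 < t < 1` the set `(1 - t) • (K ∩ (x₀ +ᵥ L)) + t • (K ∩ (x₁ +ᵥ L))` lies in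
`K ∩ (((1 - t) • x₀ + t • x₁) +ᵥ L)`, so the claim is the Brunn–Minkowski inequality for these
sections. Its multiplicative form for compact convex sets is proved by induction on the dimension:
the volumes of the slices `{r} × _` of a compact convex set form a quasiconcave function on `ℝ`,
and for such functions the one-dimensional Prékopa–Leindler inequality reduces, through the layer
cake formula, to the additivity of length on sums of intervals. Rescaling to unit volume gives the
additive form. Since `g` is a `toReal`, every section must also have finite volume: one of
infinite volume would be unbounded, hence contain a ray whose direction recedes in `K` and in `L`,
and then `K ∩ (a +ᵥ L)`, which has interior points, would contain infinitely many disjoint balls.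
-/

open MeasureTheory Set Pointwise Bornology
open scoped ENNReal

namespace Real

theorem volume_eq_ofReal_csSup_sub_csInf {X : Set ℝ} (hX : Convex ℝ X) (hne : X.Nonempty)
    (hb : IsBounded X) : volume X = ENNReal.ofReal (sSup X - sInf X) := by
  refine le_antisymm ?_ ?_
  · calc volume X ≤ volume (Icc (sInf X) (sSup X)) :=
          measure_mono (subset_Icc_csInf_csSup hb.bddBelow hb.bddAbove)
      _ = _ := volume_Icc
  · calc ENNReal.ofReal (sSup X - sInf X) = volume (Ioo (sInf X) (sSup X)) := volume_Ioo.symm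
      _ ≤ volume X := measure_mono
          ((hX.isConnected hne).Ioo_csInf_csSup_subset hb.bddBelow hb.bddAbove)

theorem volume_add_of_convex {X Y : Set ℝ} (hX : Convex ℝ X) (hY : Convex ℝ Y)
    (hXne : X.Nonempty) (hYne : Y.Nonempty) (hXb : IsBounded X) (hYb : IsBounded Y) :
    volume (X + Y) = volume X + volume Y := by
  rw [volume_eq_ofReal_csSup_sub_csInf (hX.add hY) (hXne.add hYne) (hXb.add hYb),
    volume_eq_ofReal_csSup_sub_csInf hX hXne hXb, volume_eq_ofReal_csSup_sub_csInf hY hYne hYb,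
    csSup_add hXne hXb.bddAbove hYne hYb.bddAbove, csInf_add hXne hXb.bddBelow hYne hYb.bddBelow,
    ← ENNReal.ofReal_add (sub_nonneg.2 (Real.sInf_le_sSup X hXb.bddBelow hXb.bddAbove))
      (sub_nonneg.2 (Real.sInf_le_sSup Y hYb.bddBelow hYb.bddAbove))]
  ring_nf

end Real

namespace ENNReal

theorem rpow_one_sub_mul_rpow_le_add {a b : ℝ≥0∞} {t : ℝ} (ht₀ : 0 < t) (ht₁ : t < 1) :
    a ^ (1 - t) * b ^ t ≤ ENNReal.ofReal (1 - t) * a + ENNReal.ofReal t * b := by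
  have ht₁' : 0 < 1 - t := sub_pos.2 ht₁
  rcases eq_or_ne a ⊤ with rfl | ha
  · rcases eq_or_ne b 0 with rfl | hb
    · simp [zero_rpow_of_pos ht₀]
    · rw [mul_top (by simpa using ht₁'), top_add]
      exact le_top
  rcases eq_or_ne b ⊤ with rfl | hb
  · rcases eq_or_ne a 0 with rfl | ha'
    · simp [zero_rpow_of_pos ht₁']
    · rw [mul_top (by simpa using ht₀), add_top]
      exact le_top
  lift a to NNReal using ha
  lift b to NNReal using hb
  have := NNReal.geom_mean_le_arith_mean2_weighted ⟨1 - t, ht₁'.le⟩ ⟨t, ht₀.le⟩ a b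
    (NNReal.eq (sub_add_cancel 1 t))
  rw [ENNReal.ofReal, ENNReal.ofReal, Real.toNNReal_of_nonneg ht₁'.le,
    Real.toNNReal_of_nonneg ht₀.le, ← coe_rpow_of_nonneg _ ht₁'.le, ← coe_rpow_of_nonneg _ ht₀.le]
  exact_mod_cast this

end ENNReal

theorem lintegral_eq_mul_lintegral_measure_lt {α : Type*} [MeasurableSpace α] (μ : Measure α)
    {f : α → ℝ≥0∞} (hf : AEMeasurable f μ) (hf_top : ∀ x, f x ≠ ⊤) {c : ℝ≥0∞}
    (hc₀ : c ≠ 0) (hc : c ≠ ⊤) :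
    ∫⁻ x, f x ∂μ = c * ∫⁻ u in Ioi 0, μ {x | ENNReal.ofReal u * c < f x} := by
  have hfc : ∀ x, f x / c ≠ ⊤ := fun x => ENNReal.div_ne_top (hf_top x) hc₀
  have layer := lintegral_eq_lintegral_meas_lt μ (f := fun x => (f x / c).toReal)
    (Filter.Eventually.of_forall fun _ => ENNReal.toReal_nonneg)
    (hf.div_const c).ennreal_toReal
  simp only [ENNReal.ofReal_toReal (hfc _)] at layer
  have hlevel : ∀ u : ℝ, 0 < u →
      μ {x | u < (f x / c).toReal} = μ {x | ENNReal.ofReal u * c < f x} := fun u hu => by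
    congr 1
    ext x
    exact (ENNReal.ofReal_lt_iff_lt_toReal hu.le (hfc x)).symm.trans
      (ENNReal.lt_div_iff_mul_lt (Or.inl hc₀) (Or.inl hc))
  rw [← setLIntegral_congr_fun measurableSet_Ioi hlevel, ← layer]
  simp_rw [div_eq_mul_inv]
  rw [lintegral_mul_const' _ _ (ENNReal.inv_ne_top.2 hc₀), ← div_eq_mul_inv,
    ENNReal.mul_div_cancel hc₀ hc]

theorem QuasiconcaveOn.measurable {β : Type*} [LinearOrder β] [TopologicalSpace β]
    [OrderTopology β] [SecondCountableTopology β] [MeasurableSpace β] [BorelSpace β]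
    {g : ℝ → β} (hg : QuasiconcaveOn ℝ univ g) : Measurable g :=
  measurable_of_Ioi fun ℓ => by
    have hconv := hg.convex_gt ℓ
    rw [sep_univ] at hconv
    exact hconv.ordConnected.measurableSet

section PrekopaLeindler

variable {t : ℝ} {f g h : ℝ → ℝ≥0∞}

theorem volume_superlevel_combo_le (ht₀ : 0 < t) (ht₁ : t < 1)
    (hgq : QuasiconcaveOn ℝ univ g) (hhq : QuasiconcaveOn ℝ univ h)
    (hgs : IsBounded (Function.support g)) (hhs : IsBounded (Function.support h))
    (hfgh : ∀ x y, g x ^ (1 - t) * h y ^ t ≤ f ((1 - t) * x + t * y))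
    {a b : ℝ≥0∞} (ha : {r | a < g r}.Nonempty) (hb : {r | b < h r}.Nonempty) :
    ENNReal.ofReal (1 - t) * volume {r | a < g r} + ENNReal.ofReal t * volume {r | b < h r}
      ≤ volume {r | a ^ (1 - t) * b ^ t < f r} := by
  have ht₁' : 0 < 1 - t := sub_pos.2 ht₁
  have hX : Convex ℝ {r | a < g r} := by simpa only [sep_univ] using hgq.convex_gt a
  have hY : Convex ℝ {r | b < h r} := by simpa only [sep_univ] using hhq.convex_gt b
  have hXb : IsBounded {r | a < g r} := hgs.subset fun r hr => (zero_le.trans_lt hr).ne'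
  have hYb : IsBounded {r | b < h r} := hhs.subset fun r hr => (zero_le.trans_lt hr).ne'
  have hsub :
      (1 - t) • {r | a < g r} + t • {r | b < h r} ⊆ {r | a ^ (1 - t) * b ^ t < f r} := by
    rintro _ ⟨_, ⟨x, hx, rfl⟩, _, ⟨y, hy, rfl⟩, rfl⟩
    calc a ^ (1 - t) * b ^ t < g x ^ (1 - t) * h y ^ t :=
          ENNReal.mul_lt_mul (ENNReal.rpow_lt_rpow hx ht₁') (ENNReal.rpow_lt_rpow hy ht₀)
      _ ≤ _ := hfgh x y
  have hscale :
      ∀ {s : ℝ} (X : Set ℝ), 0 ≤ s → volume (s • X) = ENNReal.ofReal s * volume X :=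
    fun X hs => by rw [Measure.addHaar_smul_of_nonneg _ hs, Module.finrank_self, pow_one]
  calc _ = volume ((1 - t) • {r | a < g r} + t • {r | b < h r}) := by
        rw [Real.volume_add_of_convex (hX.smul _) (hY.smul _) ha.smul_set hb.smul_set
          (hXb.smul₀ _) (hYb.smul₀ _), hscale _ ht₁'.le, hscale _ ht₀.le]
    _ ≤ _ := measure_mono hsub

theorem volume_superlevel_iSup_combo_le (ht₀ : 0 < t) (ht₁ : t < 1) (hg₀ : ⨆ r, g r ≠ 0)
    (hh₀ : ⨆ r, h r ≠ 0) (hg_top : ⨆ r, g r ≠ ⊤) (hh_top : ⨆ r, h r ≠ ⊤)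
    (hgq : QuasiconcaveOn ℝ univ g) (hhq : QuasiconcaveOn ℝ univ h)
    (hgs : IsBounded (Function.support g)) (hhs : IsBounded (Function.support h))
    (hfgh : ∀ x y, g x ^ (1 - t) * h y ^ t ≤ f ((1 - t) * x + t * y)) (u : ℝ) :
    ENNReal.ofReal (1 - t) * volume {r | ENNReal.ofReal u * (⨆ r, g r) < g r} +
        ENNReal.ofReal t * volume {r | ENNReal.ofReal u * (⨆ r, h r) < h r} ≤
      volume {r | ENNReal.ofReal u * ((⨆ r, g r) ^ (1 - t) * (⨆ r, h r) ^ t) < f r} := by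
  have ht₁' : 0 < 1 - t := sub_pos.2 ht₁
  rcases le_or_gt 1 u with hu₁ | hu₁
  · have hempty : ∀ k : ℝ → ℝ≥0∞, {r | ENNReal.ofReal u * (⨆ r, k r) < k r} = ∅ := fun k =>
      eq_empty_of_forall_notMem fun r hr => ((le_iSup k r).trans
        (le_mul_of_one_le_left' (ENNReal.one_le_ofReal.2 hu₁))).not_gt hr
    simp [hempty]
  have hlt : ∀ S : ℝ≥0∞, S ≠ 0 → S ≠ ⊤ → ENNReal.ofReal u * S < S := fun S h₀ h₁ => by
    simpa using (ENNReal.mul_lt_mul_iff_left h₀ h₁).2 (ENNReal.ofReal_lt_one.2 hu₁)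
  have hlevel : (ENNReal.ofReal u * ⨆ r, g r) ^ (1 - t) * (ENNReal.ofReal u * ⨆ r, h r) ^ t =
      ENNReal.ofReal u * ((⨆ r, g r) ^ (1 - t) * (⨆ r, h r) ^ t) := by
    rw [ENNReal.mul_rpow_of_nonneg _ _ ht₁'.le, ENNReal.mul_rpow_of_nonneg _ _ ht₀.le,
      mul_mul_mul_comm, ← ENNReal.rpow_add_of_nonneg _ _ ht₁'.le ht₀.le, sub_add_cancel,
      ENNReal.rpow_one]
  rw [← hlevel]
  exact volume_superlevel_combo_le ht₀ ht₁ hgq hhq hgs hhs hfgh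
    (lt_iSup_iff.1 (hlt _ hg₀ hg_top)) (lt_iSup_iff.1 (hlt _ hh₀ hh_top))

theorem lintegral_rpow_mul_lintegral_rpow_le_of_quasiconcave (ht₀ : 0 < t) (ht₁ : t < 1)
    (hf : Measurable f) (hf_top : ∀ r, f r ≠ ⊤) (hg_top : ⨆ r, g r ≠ ⊤)
    (hh_top : ⨆ r, h r ≠ ⊤) (hgq : QuasiconcaveOn ℝ univ g) (hhq : QuasiconcaveOn ℝ univ h)
    (hgs : IsBounded (Function.support g)) (hhs : IsBounded (Function.support h))
    (hfgh : ∀ x y, g x ^ (1 - t) * h y ^ t ≤ f ((1 - t) * x + t * y)) :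
    (∫⁻ r, g r) ^ (1 - t) * (∫⁻ r, h r) ^ t ≤ ∫⁻ r, f r := by
  have ht₁' : 0 < 1 - t := sub_pos.2 ht₁
  rcases eq_or_ne (⨆ r, g r) 0 with hg₀ | hg₀
  · simp [show g = 0 from funext (ENNReal.iSup_eq_zero.1 hg₀), ENNReal.zero_rpow_of_pos ht₁']
  rcases eq_or_ne (⨆ r, h r) 0 with hh₀ | hh₀
  · simp [show h = 0 from funext (ENNReal.iSup_eq_zero.1 hh₀), ENNReal.zero_rpow_of_pos ht₀]
  set Sg := ⨆ r, g r
  set Sh := ⨆ r, h r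
  set c := Sg ^ (1 - t) * Sh ^ t
  have hc₀ : c ≠ 0 := mul_ne_zero (ENNReal.rpow_pos hg₀.bot_lt hg_top).ne'
    (ENNReal.rpow_pos hh₀.bot_lt hh_top).ne'
  have hc : c ≠ ⊤ := ENNReal.mul_ne_top (ENNReal.rpow_ne_top_of_nonneg ht₁'.le hg_top)
    (ENNReal.rpow_ne_top_of_nonneg ht₀.le hh_top)
  set X := fun u : ℝ => volume {r | ENNReal.ofReal u * Sg < g r}
  set Y := fun u : ℝ => volume {r | ENNReal.ofReal u * Sh < h r}
  have hX : Antitone X := fun u v huv => measure_mono fun r hr =>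
    lt_of_le_of_lt (mul_le_mul_of_nonneg_right (ENNReal.ofReal_le_ofReal huv) zero_le) hr
  calc (∫⁻ r, g r) ^ (1 - t) * (∫⁻ r, h r) ^ t
      = (Sg * ∫⁻ u in Ioi 0, X u) ^ (1 - t) * (Sh * ∫⁻ u in Ioi 0, Y u) ^ t := by
        rw [lintegral_eq_mul_lintegral_measure_lt _ hgq.measurable.aemeasurable
            (fun r => ne_top_of_le_ne_top hg_top (le_iSup g r)) hg₀ hg_top,
          lintegral_eq_mul_lintegral_measure_lt _ hhq.measurable.aemeasurable
            (fun r => ne_top_of_le_ne_top hh_top (le_iSup h r)) hh₀ hh_top]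
    _ = c * ((∫⁻ u in Ioi 0, X u) ^ (1 - t) * (∫⁻ u in Ioi 0, Y u) ^ t) := by
        rw [ENNReal.mul_rpow_of_nonneg _ _ ht₁'.le, ENNReal.mul_rpow_of_nonneg _ _ ht₀.le]
        ring
    _ ≤ c * (ENNReal.ofReal (1 - t) * (∫⁻ u in Ioi 0, X u)
          + ENNReal.ofReal t * ∫⁻ u in Ioi 0, Y u) :=
        mul_le_mul_right (ENNReal.rpow_one_sub_mul_rpow_le_add ht₀ ht₁) c
    _ = c * ∫⁻ u in Ioi 0, (ENNReal.ofReal (1 - t) * X u + ENNReal.ofReal t * Y u) := by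
        rw [lintegral_add_left (hX.measurable.const_mul _),
          lintegral_const_mul' _ X ENNReal.ofReal_ne_top,
          lintegral_const_mul' _ Y ENNReal.ofReal_ne_top]
    _ ≤ c * ∫⁻ u in Ioi 0, volume {r | ENNReal.ofReal u * c < f r} := by
        gcongr c * ?_
        exact lintegral_mono
          (volume_superlevel_iSup_combo_le ht₀ ht₁ hg₀ hh₀ hg_top hh_top hgq hhq hgs hhs hfgh)
    _ = ∫⁻ r, f r :=
        (lintegral_eq_mul_lintegral_measure_lt _ hf.aemeasurable hf_top hc₀ hc).symm

end PrekopaLeindler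

def HasBrunnMinkowski (E : Type*) [AddCommGroup E] [Module ℝ E] [TopologicalSpace E]
    [MeasurableSpace E] (μ : Measure E) : Prop :=
  ∀ ⦃t : ℝ⦄, 0 < t → t < 1 → ∀ ⦃A B : Set E⦄, Convex ℝ A → Convex ℝ B →
    IsCompact A → IsCompact B → μ A ^ (1 - t) * μ B ^ t ≤ μ ((1 - t) • A + t • B)

namespace HasBrunnMinkowski

variable {E : Type*} [AddCommGroup E] [Module ℝ E] [TopologicalSpace E] [MeasurableSpace E]
  {μ : Measure E}

theorem of_subsingleton [Subsingleton E] (μ : Measure E) : HasBrunnMinkowski E μ := by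
  intro t ht₀ ht₁ A B _ _ _ _
  rcases A.eq_empty_or_nonempty with rfl | hA
  · simp [ENNReal.zero_rpow_of_pos (sub_pos.2 ht₁)]
  rcases B.eq_empty_or_nonempty with rfl | hB
  · simp [ENNReal.zero_rpow_of_pos ht₀]
  have hsum : ((1 - t) • A + t • B).Nonempty := hA.smul_set.add hB.smul_set
  rw [hsum.eq_univ, hA.eq_univ, hB.eq_univ, ← ENNReal.rpow_add_of_nonneg _ _ (sub_pos.2 ht₁).le
    ht₀.le, sub_add_cancel, ENNReal.rpow_one]

theorem of_measurePreserving {F : Type*} [AddCommGroup F] [Module ℝ F] [TopologicalSpace F]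
    [MeasurableSpace F] {ν : Measure F} (h : HasBrunnMinkowski E μ) (e : F ≃ᵐ E)
    (he : MeasurePreserving e ν μ) (hlin : IsLinearMap ℝ e) (hcont : Continuous e) :
    HasBrunnMinkowski F ν := by
  intro t ht₀ ht₁ A B hA hB hAc hBc
  let L : F →ₗ[ℝ] E := hlin.mk' e
  have hmeasure : ∀ C : Set F, μ (e '' C) = ν C := fun C => by
    rw [e.image_eq_preimage_symm, he.symm.measure_preimage_equiv]
  have hsum : e '' ((1 - t) • A + t • B) = (1 - t) • (e '' A) + t • (e '' B) := by
    change L '' _ = (1 - t) • (L '' A) + t • (L '' B)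
    rw [Set.image_add, image_smul_set, image_smul_set]
  have key :=
    h ht₀ ht₁ (hA.linear_image L) (hB.linear_image L) (hAc.image hcont) (hBc.image hcont)
  rwa [show ⇑L = ⇑e from rfl, ← hsum, hmeasure, hmeasure, hmeasure] at key

end HasBrunnMinkowski

section Slices

theorem IsCompact.slice {E : Type*} [TopologicalSpace E] [T2Space E] {A : Set (ℝ × E)}
    (hA : IsCompact A) (r : ℝ) : IsCompact (Prod.mk r ⁻¹' A) :=
  (hA.image continuous_snd).of_isClosed_subset (hA.isClosed.preimage (Continuous.prodMk_right r))
    fun v hv => ⟨(r, v), hv, rfl⟩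

variable {E : Type*} [AddCommGroup E] [Module ℝ E]

theorem Convex.slice {A : Set (ℝ × E)} (hA : Convex ℝ A) (r : ℝ) :
    Convex ℝ (Prod.mk r ⁻¹' A) := by
  intro v hv w hw a b ha hb hab
  simpa [Prod.smul_mk, ← add_mul, hab] using hA hv hw ha hb hab

theorem smul_slice_add_smul_slice_subset (A B : Set (ℝ × E)) (a b x y : ℝ) :
    a • (Prod.mk x ⁻¹' A) + b • (Prod.mk y ⁻¹' B) ⊆
      Prod.mk (a * x + b * y) ⁻¹' (a • A + b • B) := by
  rintro _ ⟨_, ⟨v, hv, rfl⟩, _, ⟨w, hw, rfl⟩, rfl⟩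
  exact ⟨_, ⟨(x, v), hv, rfl⟩, _, ⟨(y, w), hw, rfl⟩, by simp⟩

end Slices

namespace HasBrunnMinkowski

variable {E : Type*} [AddCommGroup E] [Module ℝ E] [TopologicalSpace E] [T2Space E]
  [MeasurableSpace E] {μ : Measure E}

theorem quasiconcaveOn_measure_slice (h : HasBrunnMinkowski E μ) {A : Set (ℝ × E)}
    (hA : Convex ℝ A) (hAc : IsCompact A) :
    QuasiconcaveOn ℝ univ fun r => μ (Prod.mk r ⁻¹' A) := by
  refine quasiconcaveOn_iff_min_le.2 ⟨convex_univ, fun x _ y _ a b ha hb hab => ?_⟩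
  obtain rfl : a = 1 - b := by linarith
  rcases hb.eq_or_lt with rfl | hb₀
  · simp
  rcases (show b ≤ 1 by linarith).eq_or_lt with rfl | hb₁
  · simp
  set m := min (μ (Prod.mk x ⁻¹' A)) (μ (Prod.mk y ⁻¹' A))
  calc m = m ^ (1 - b) * m ^ b := by
        rw [← ENNReal.rpow_add_of_nonneg _ _ ha hb, sub_add_cancel, ENNReal.rpow_one]
    _ ≤ μ (Prod.mk x ⁻¹' A) ^ (1 - b) * μ (Prod.mk y ⁻¹' A) ^ b := by
        gcongr
        exacts [min_le_left _ _, min_le_right _ _]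
    _ ≤ μ ((1 - b) • (Prod.mk x ⁻¹' A) + b • (Prod.mk y ⁻¹' A)) :=
        h hb₀ hb₁ (hA.slice x) (hA.slice y) (hAc.slice x) (hAc.slice y)
    _ ≤ μ (Prod.mk ((1 - b) • x + b • y) ⁻¹' A) := measure_mono
        ((smul_slice_add_smul_slice_subset A A _ _ x y).trans
          (preimage_mono (hA.set_combo_subset ha hb hab)))

theorem prod [ContinuousAdd E] [ContinuousConstSMul ℝ E] [OpensMeasurableSpace E] [SFinite μ]
    [IsFiniteMeasureOnCompacts μ] (h : HasBrunnMinkowski E μ) :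
    HasBrunnMinkowski (ℝ × E) (volume.prod μ) := by
  intro t ht₀ ht₁ A B hA hB hAc hBc
  have hSc : IsCompact ((1 - t) • A + t • B) := (hAc.smul _).add (hBc.smul _)
  have hsup : ∀ {C : Set (ℝ × E)}, IsCompact C → ⨆ r, μ (Prod.mk r ⁻¹' C) ≠ ⊤ := fun hC =>
    ne_top_of_le_ne_top (hC.image continuous_snd).measure_lt_top.ne
      (iSup_le fun r => measure_mono fun v hv => ⟨(r, v), hv, rfl⟩)
  have hsupp : ∀ {C : Set (ℝ × E)}, IsCompact C →
      IsBounded (Function.support fun r => μ (Prod.mk r ⁻¹' C)) := fun hC =>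
    (hC.image continuous_fst).isBounded.subset fun r hr =>
      let ⟨v, hv⟩ := nonempty_of_measure_ne_zero hr
      ⟨(r, v), hv, rfl⟩
  rw [Measure.prod_apply hAc.measurableSet, Measure.prod_apply hBc.measurableSet,
    Measure.prod_apply hSc.measurableSet]
  exact lintegral_rpow_mul_lintegral_rpow_le_of_quasiconcave ht₀ ht₁
    (measurable_measure_prodMk_left hSc.measurableSet) (fun r => (hSc.slice r).measure_lt_top.ne)
    (hsup hAc) (hsup hBc) (h.quasiconcaveOn_measure_slice hA hAc)
    (h.quasiconcaveOn_measure_slice hB hBc) (hsupp hAc) (hsupp hBc) fun x y =>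
      (h ht₀ ht₁ (hA.slice x) (hB.slice y) (hAc.slice x) (hBc.slice y)).trans
        (measure_mono (smul_slice_add_smul_slice_subset A B _ _ x y))

end HasBrunnMinkowski

theorem hasBrunnMinkowski_pi : ∀ n : ℕ, HasBrunnMinkowski (Fin n → ℝ) volume
  | 0 => .of_subsingleton _
  | n + 1 => (hasBrunnMinkowski_pi n).prod.of_measurePreserving
      (MeasurableEquiv.piFinSuccAbove (fun _ => ℝ) 0)
      (measurePreserving_piFinSuccAbove (fun _ => volume) 0) ⟨fun _ _ => rfl, fun _ _ => rfl⟩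
      ((continuous_apply 0).prodMk (continuous_pi fun _ => continuous_apply _))

theorem hasBrunnMinkowski_euclideanSpace (n : ℕ) :
    HasBrunnMinkowski (EuclideanSpace ℝ (Fin n)) volume :=
  (hasBrunnMinkowski_pi n).of_measurePreserving (MeasurableEquiv.toLp 2 (Fin n → ℝ)).symm
    (EuclideanSpace.volume_preserving_symm_measurableEquiv_toLp (Fin n))
    ⟨fun _ _ => rfl, fun _ _ => rfl⟩ (PiLp.continuous_ofLp 2 _)

def Set.recessionCone {E : Type*} [AddCommGroup E] [Module ℝ E] (C : Set E) : Set E :=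
  {d | ∀ x ∈ C, ∀ s : ℝ, 0 ≤ s → x + s • d ∈ C}

section Recession

open Filter Topology Metric

variable {E : Type*} [NormedAddCommGroup E] [NormedSpace ℝ E] {C : Set E}

theorem Convex.mem_recessionCone (hC : Convex ℝ C) (hCcl : IsClosed C) {p d : E}
    (hray : ∀ s : ℝ, 0 ≤ s → p + s • d ∈ C) : d ∈ C.recessionCone := by
  intro x hx s hs
  have hlim :
      Tendsto (fun ε : ℝ => (1 - ε) • x + ε • p + s • d) (𝓝[>] 0) (𝓝 (x + s • d)) := by
    have hcont : Continuous fun ε : ℝ => (1 - ε) • x + ε • p + s • d := by fun_prop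
    simpa using (hcont.tendsto 0).mono_left nhdsWithin_le_nhds
  refine hCcl.mem_of_tendsto hlim ?_
  filter_upwards [Ioo_mem_nhdsGT one_pos] with ε hε
  convert hC hx (hray (s / ε) (div_nonneg hs hε.1.le)) (sub_nonneg.2 hε.2.le) hε.1.le
    (sub_add_cancel 1 ε) using 1
  rw [smul_add, smul_smul, mul_div_cancel₀ _ hε.1.ne', add_assoc]

theorem IsClosed.exists_norm_eq_one_mem_recessionCone [ProperSpace E] (hCcl : IsClosed C)
    (hC : Convex ℝ C) (hne : C.Nonempty) (hub : ¬IsBounded C) :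
    ∃ d : E, ‖d‖ = 1 ∧ d ∈ C.recessionCone := by
  obtain ⟨p, hp⟩ := hne
  have hfar : ∀ k : ℕ, ∃ u ∈ C, (k : ℝ) + 1 ≤ ‖u - p‖ := fun k => by
    by_contra! H
    exact hub (isBounded_closedBall.subset fun u hu => by
      simpa [dist_eq_norm] using (H u hu).le)
  choose u hu hfar using hfar
  have hpos : ∀ k, 0 < ‖u k - p‖ := fun k => lt_of_lt_of_le (by positivity) (hfar k)
  set dir := fun k => ‖u k - p‖⁻¹ • (u k - p)
  have hdir : ∀ k, dir k ∈ sphere (0 : E) 1 := fun k => by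
    simp [dir, norm_smul, (hpos k).ne']
  obtain ⟨d, hd, φ, hφ, hlim⟩ := (isCompact_sphere (0 : E) 1).tendsto_subseq hdir
  refine ⟨d, by simpa using hd, hC.mem_recessionCone hCcl (p := p) fun s hs => ?_⟩
  have hmem : ∀ k, s ≤ ‖u k - p‖ → p + s • dir k ∈ C := fun k hk => by
    convert hC hp (hu k) (sub_nonneg.2 ((div_le_one (hpos k)).2 hk))
      (div_nonneg hs (hpos k).le) (sub_add_cancel 1 _) using 1
    simp only [dir, smul_smul]
    module
  have hunbdd : Tendsto (fun k => ‖u (φ k) - p‖) atTop atTop :=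
    tendsto_atTop_mono (fun k => (Nat.cast_le.2 (hφ.id_le k)).trans (by linarith [hfar (φ k)]))
      tendsto_natCast_atTop_atTop
  exact hCcl.mem_of_tendsto ((hlim.const_smul s).const_add p)
    ((hunbdd.eventually_ge_atTop s).mono fun k hk => hmem (φ k) hk)

variable [MeasurableSpace E] [BorelSpace E] (μ : Measure E) [μ.IsAddHaarMeasure]

theorem measure_eq_top_of_ball_subset_of_mem_recessionCone {c d : E} {r : ℝ} (hr : 0 < r)
    (hd : ‖d‖ = 1) (hball : ball c r ⊆ C) (hdC : d ∈ C.recessionCone) : μ C = ⊤ := by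
  set B := fun k : ℕ => (2 * r * k) • d +ᵥ ball c r
  have hBC : ∀ k, B k ⊆ C := fun k => by
    rintro _ ⟨z, hz, rfl⟩
    show (2 * r * k) • d + z ∈ C
    rw [add_comm]
    exact hdC z (hball hz) _ (by positivity)
  have hdisj : Pairwise (Function.onFun Disjoint B) := fun j k hjk => by
    simp only [Function.onFun, B, vadd_ball]
    apply ball_disjoint_ball
    have hjk' : (1 : ℝ) ≤ |(j : ℝ) - k| := by
      exact_mod_cast Int.one_le_abs (sub_ne_zero.2 (Nat.cast_injective.ne hjk))
    rw [dist_vadd_cancel_right, dist_eq_norm, ← sub_smul, norm_smul, hd, mul_one, ← mul_sub,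
      Real.norm_eq_abs, abs_mul, abs_of_pos (by positivity : 0 < 2 * r)]
    nlinarith
  have hunion : μ (⋃ k, B k) = ⊤ := by
    rw [measure_iUnion hdisj fun k => measurableSet_ball.const_vadd _]
    simp only [B, measure_vadd]
    exact ENNReal.tsum_const_eq_top_of_ne_zero (measure_ball_pos μ c hr).ne'
  exact top_le_iff.1 (hunion ▸ measure_mono (iUnion_subset hBC))

variable [FiniteDimensional ℝ E]

theorem Convex.measure_eq_top_of_mem_recessionCone (hC : Convex ℝ C) (hpos : 0 < μ C) {d : E}
    (hd : ‖d‖ = 1) (hdC : d ∈ C.recessionCone) : μ C = ⊤ := by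
  obtain ⟨c, hc⟩ : (interior C).Nonempty := by
    by_contra! hint
    have hfrontier : frontier C = closure C := by rw [frontier, hint, sdiff_empty]
    exact hpos.ne' (measure_mono_null subset_closure (hfrontier ▸ hC.addHaar_frontier μ))
  obtain ⟨r, hr, hball⟩ := isOpen_iff.1 isOpen_interior c hc
  exact measure_eq_top_of_ball_subset_of_mem_recessionCone μ hr hd
    (hball.trans interior_subset) hdC

theorem Convex.isBounded_of_measure_ne_top (hC : Convex ℝ C) (hCcl : IsClosed C)
    (hpos : 0 < μ C) (hfin : μ C ≠ ⊤) : IsBounded C := by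
  by_contra hub
  obtain ⟨d, hd, hdC⟩ := hCcl.exists_norm_eq_one_mem_recessionCone hC
    (nonempty_of_measure_ne_zero hpos.ne') hub
  exact hfin (hC.measure_eq_top_of_mem_recessionCone μ hpos hd hdC)

theorem measure_inter_vadd_ne_top {K L : Set E} (hK : Convex ℝ K) (hKcl : IsClosed K)
    (hL : Convex ℝ L) (hLcl : IsClosed L) {a : E} (hpos : 0 < μ (K ∩ (a +ᵥ L)))
    (hfin : μ (K ∩ (a +ᵥ L)) ≠ ⊤) (x : E) : μ (K ∩ (x +ᵥ L)) ≠ ⊤ := by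
  intro htop
  have hB : Convex ℝ (K ∩ (x +ᵥ L)) := hK.inter (hL.vadd x)
  have hBne : (K ∩ (x +ᵥ L)).Nonempty := nonempty_of_measure_ne_zero (μ := μ) (by simp [htop])
  have hub : ¬IsBounded (K ∩ (x +ᵥ L)) := fun hb => hb.measure_lt_top.ne htop
  obtain ⟨d, hd, hdB⟩ :=
    (hKcl.inter (hLcl.vadd x)).exists_norm_eq_one_mem_recessionCone hB hBne hub
  obtain ⟨p, hpK, q, hqL, rfl⟩ := hBne
  have hdK : d ∈ K.recessionCone := hK.mem_recessionCone hKcl (p := x +ᵥ q) fun s hs =>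
    (hdB _ ⟨hpK, q, hqL, rfl⟩ s hs).1
  have hdL : d ∈ L.recessionCone := hL.mem_recessionCone hLcl (p := q) fun s hs => by
    simpa [mem_vadd_set_iff_neg_vadd_mem, add_assoc] using (hdB _ ⟨hpK, q, hqL, rfl⟩ s hs).2
  refine hfin ((hK.inter (hL.vadd a)).measure_eq_top_of_mem_recessionCone μ hpos hd ?_)
  rintro y ⟨hyK, l, hl, rfl⟩ s hs
  exact ⟨hdK _ hyK s hs, l + s • d, hdL l hl s hs, by simp [vadd_eq_add, add_assoc]⟩

end Recession

section Additive

open Module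

variable {E : Type*} [NormedAddCommGroup E] [NormedSpace ℝ E] [FiniteDimensional ℝ E]
  [MeasurableSpace E] [BorelSpace E] {μ : Measure E} [μ.IsAddHaarMeasure]

theorem toReal_addHaar_smul {s : ℝ} (hs : 0 ≤ s) (D : Set E) :
    (μ (s • D)).toReal = s ^ finrank ℝ E * (μ D).toReal := by
  rw [Measure.addHaar_smul_of_nonneg μ hs, ENNReal.toReal_mul,
    ENNReal.toReal_ofReal (by positivity)]

theorem mul_rpow_le_of_vadd_smul_subset (hn : finrank ℝ E ≠ 0) {s : ℝ} (hs : 0 ≤ s)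
    {C D : Set E} (x : E) (hsub : x +ᵥ s • D ⊆ C) (hC : μ C ≠ ⊤) :
    s * (μ D).toReal ^ (1 / (finrank ℝ E : ℝ)) ≤
      (μ C).toReal ^ (1 / (finrank ℝ E : ℝ)) := by
  have hle : s ^ finrank ℝ E * (μ D).toReal ≤ (μ C).toReal := by
    rw [← toReal_addHaar_smul hs, ← measure_vadd μ x]
    exact ENNReal.toReal_mono hC (measure_mono hsub)
  calc s * (μ D).toReal ^ (1 / (finrank ℝ E : ℝ))
      = (s ^ finrank ℝ E * (μ D).toReal) ^ (1 / (finrank ℝ E : ℝ)) := by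
        rw [Real.mul_rpow (by positivity) ENNReal.toReal_nonneg, one_div,
          Real.pow_rpow_inv_natCast hs hn]
    _ ≤ _ := Real.rpow_le_rpow (by positivity) hle (by positivity)

theorem measure_inv_rpow_smul_eq_one (hn : finrank ℝ E ≠ 0) {A : Set E} (h₀ : μ A ≠ 0)
    (h : μ A ≠ ⊤) : μ (((μ A).toReal ^ (1 / (finrank ℝ E : ℝ)))⁻¹ • A) = 1 := by
  have hα : 0 < (μ A).toReal := ENNReal.toReal_pos h₀ h
  rw [← ENNReal.toReal_eq_one_iff, toReal_addHaar_smul (by positivity), inv_pow, one_div,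
    Real.rpow_inv_natCast_pow hα.le hn, inv_mul_cancel₀ hα.ne']

theorem HasBrunnMinkowski.add_rpow_le_of_isCompact (h : HasBrunnMinkowski E μ)
    (hn : finrank ℝ E ≠ 0) {t : ℝ} (ht₀ : 0 < t) (ht₁ : t < 1) {A B C : Set E}
    (hA : Convex ℝ A) (hB : Convex ℝ B) (hAc : IsCompact A) (hBc : IsCompact B) (hA₀ : μ A ≠ 0)
    (hB₀ : μ B ≠ 0) (hCfin : μ C ≠ ⊤) (hsub : (1 - t) • A + t • B ⊆ C) :
    (1 - t) * (μ A).toReal ^ (1 / (finrank ℝ E : ℝ)) +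
        t * (μ B).toReal ^ (1 / (finrank ℝ E : ℝ)) ≤
      (μ C).toReal ^ (1 / (finrank ℝ E : ℝ)) := by
  set p := (μ A).toReal ^ (1 / (finrank ℝ E : ℝ))
  set q := (μ B).toReal ^ (1 / (finrank ℝ E : ℝ))
  have hp : 0 < p := Real.rpow_pos_of_pos (ENNReal.toReal_pos hA₀ hAc.measure_lt_top.ne) _
  have hq : 0 < q := Real.rpow_pos_of_pos (ENNReal.toReal_pos hB₀ hBc.measure_lt_top.ne) _
  set m := (1 - t) * p + t * q
  have hm : 0 < m := by nlinarith
  set s := t * q / m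
  have hms : m * s = t * q := mul_div_cancel₀ _ hm.ne'
  have hs₀ : 0 < s := by positivity
  have hs₁ : s < 1 := (div_lt_one hm).2 (by nlinarith)
  set D := (1 - s) • p⁻¹ • A + s • q⁻¹ • B
  have hD : 1 ≤ μ D := by
    have hA₁ : μ (p⁻¹ • A) = 1 := measure_inv_rpow_smul_eq_one hn hA₀ hAc.measure_lt_top.ne
    have hB₁ : μ (q⁻¹ • B) = 1 := measure_inv_rpow_smul_eq_one hn hB₀ hBc.measure_lt_top.ne
    simpa [hA₁, hB₁] using
      h hs₀ hs₁ (hA.smul p⁻¹) (hB.smul q⁻¹) (hAc.smul p⁻¹) (hBc.smul q⁻¹)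
  have hDfin : μ D ≠ ⊤ := (((hAc.smul _).smul _).add ((hBc.smul _).smul _)).measure_lt_top.ne
  have hmD : m • D = (1 - t) • A + t • B := by
    have hcoeffA : m * (1 - s) * p⁻¹ = 1 - t := by
      rw [mul_sub, mul_one, hms, show m - t * q = (1 - t) * p by simp only [m]; ring,
        mul_inv_cancel_right₀ hp.ne']
    have hcoeffB : m * s * q⁻¹ = t := by rw [hms, mul_inv_cancel_right₀ hq.ne']
    rw [smul_add, smul_smul, smul_smul, smul_smul, smul_smul, hcoeffA, hcoeffB]
  calc (1 - t) * p + t * q = m := rfl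
    _ ≤ m * (μ D).toReal ^ (1 / (finrank ℝ E : ℝ)) := le_mul_of_one_le_right hm.le
        (Real.one_le_rpow (by simpa using ENNReal.toReal_mono hDfin hD) (by positivity))
    _ ≤ _ := mul_rpow_le_of_vadd_smul_subset hn hm.le 0 (by rwa [zero_vadd, hmD]) hCfin

theorem HasBrunnMinkowski.add_rpow_le (h : HasBrunnMinkowski E μ) {t : ℝ} (ht₀ : 0 < t)
    (ht₁ : t < 1) {A B C : Set E} (hA : Convex ℝ A) (hB : Convex ℝ B) (hAcl : IsClosed A)
    (hBcl : IsClosed B) (hAne : A.Nonempty) (hBne : B.Nonempty) (hAfin : μ A ≠ ⊤)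
    (hBfin : μ B ≠ ⊤) (hCfin : μ C ≠ ⊤) (hsub : (1 - t) • A + t • B ⊆ C) :
    (1 - t) * (μ A).toReal ^ (1 / (finrank ℝ E : ℝ)) +
        t * (μ B).toReal ^ (1 / (finrank ℝ E : ℝ)) ≤
      (μ C).toReal ^ (1 / (finrank ℝ E : ℝ)) := by
  rcases eq_or_ne (finrank ℝ E) 0 with hn | hn
  · simp [hn]
  have hn' : 1 / (finrank ℝ E : ℝ) ≠ 0 := by positivity
  obtain ⟨a, ha⟩ := hAne
  obtain ⟨b, hb⟩ := hBne
  rcases eq_or_ne (μ A) 0 with hA₀ | hA₀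
  · rw [hA₀, ENNReal.toReal_zero, Real.zero_rpow hn', mul_zero, zero_add]
    refine mul_rpow_le_of_vadd_smul_subset hn ht₀.le ((1 - t) • a) ?_ hCfin
    rintro _ ⟨y, hy, rfl⟩
    exact hsub (add_mem_add (smul_mem_smul_set ha) hy)
  rcases eq_or_ne (μ B) 0 with hB₀ | hB₀
  · rw [hB₀, ENNReal.toReal_zero, Real.zero_rpow hn', mul_zero, add_zero]
    refine mul_rpow_le_of_vadd_smul_subset hn (sub_pos.2 ht₁).le (t • b) ?_ hCfin
    rintro _ ⟨y, hy, rfl⟩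
    show t • b + y ∈ C
    rw [add_comm]
    exact hsub (add_mem_add hy (smul_mem_smul_set hb))
  exact h.add_rpow_le_of_isCompact hn ht₀ ht₁ hA hB
    (Metric.isCompact_of_isClosed_isBounded hAcl
      (hA.isBounded_of_measure_ne_top μ hAcl (pos_iff_ne_zero.2 hA₀) hAfin))
    (Metric.isCompact_of_isClosed_isBounded hBcl
      (hB.isBounded_of_measure_ne_top μ hBcl (pos_iff_ne_zero.2 hB₀) hBfin))
    hA₀ hB₀ hCfin hsub

end Additive

theorem Convex.smul_inter_vadd_add_smul_inter_vadd_subset {E : Type*} [AddCommGroup E]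
    [Module ℝ E] {K L : Set E} (hK : Convex ℝ K) (hL : Convex ℝ L) {a b : ℝ} (ha : 0 ≤ a)
    (hb : 0 ≤ b) (hab : a + b = 1) (x y : E) :
    a • (K ∩ (x +ᵥ L)) + b • (K ∩ (y +ᵥ L)) ⊆ K ∩ ((a • x + b • y) +ᵥ L) := by
  rintro _ ⟨_, ⟨u, ⟨huK, l, hl, rfl⟩, rfl⟩, _, ⟨v, ⟨hvK, l', hl', rfl⟩, rfl⟩, rfl⟩
  refine ⟨hK huK hvK ha hb hab, a • l + b • l', hL hl hl' ha hb hab, ?_⟩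
  simp only [vadd_eq_add, smul_add]
  abel

theorem covariogram_one_div_n_concave_general
    (n : ℕ)
    (K L : Set (EuclideanSpace ℝ (Fin n)))
    (hKclosed : IsClosed K) (hKconv : Convex ℝ K)
    (hLclosed : IsClosed L) (hLconv : Convex ℝ L)
    (g : EuclideanSpace ℝ (Fin n) → ℝ)
    (hg : ∀ x, g x = (volume (K ∩ (x +ᵥ L))).toReal)
    (a : EuclideanSpace ℝ (Fin n))
    (hpos : 0 < volume (K ∩ (a +ᵥ L)))
    (hfin : volume (K ∩ (a +ᵥ L)) < ⊤) :
    ∀ x₀ ∈ K + -L, ∀ x₁ ∈ K + -L, ∀ t ∈ Icc (0 : ℝ) 1,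
      (1 - t) * g x₀ ^ (1 / (n : ℝ)) + t * g x₁ ^ (1 / (n : ℝ))
        ≤ g ((1 - t) • x₀ + t • x₁) ^ (1 / (n : ℝ)) := by
  intro x₀ hx₀ x₁ hx₁ t ht
  rcases ht.1.eq_or_lt with rfl | ht₀
  · simp
  rcases ht.2.eq_or_lt with rfl | ht₁
  · simp
  have hne : ∀ x ∈ K + -L, (K ∩ (x +ᵥ L)).Nonempty := by
    rintro _ ⟨k, hk, l, hl, rfl⟩
    exact ⟨k, hk, -l, hl, by simp⟩
  have hfin' := measure_inter_vadd_ne_top volume hKconv hKclosed hLconv hLclosed hpos hfin.ne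
  have hclosed : ∀ x : EuclideanSpace ℝ (Fin n), IsClosed (K ∩ (x +ᵥ L)) := fun x =>
    hKclosed.inter (hLclosed.vadd x)
  simpa only [hg, finrank_euclideanSpace_fin] using
    (hasBrunnMinkowski_euclideanSpace n).add_rpow_le ht₀ ht₁ (hKconv.inter (hLconv.vadd x₀))
      (hKconv.inter (hLconv.vadd x₁)) (hclosed x₀) (hclosed x₁) (hne x₀ hx₀) (hne x₁ hx₁)
      (hfin' _) (hfin' _) (hfin' _)
      (hKconv.smul_inter_vadd_add_smul_inter_vadd_subset hLconv (sub_nonneg.2 ht.2) ht.1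
        (sub_add_cancel 1 t) x₀ x₁)

/-- Lemma 2.1 (1/n-concavity): the cross covariogram of closed convex sets satisfying the
standing hypothesis is `1/n`-concave on its support `K + (-L)`. -/
theorem covariogram_one_div_n_concave
    (n : ℕ) (hn : 1 < n)
    (K L : Set (EuclideanSpace ℝ (Fin n)))
    (hKne : K.Nonempty) (hKclosed : IsClosed K) (hKconv : Convex ℝ K)
    (hLne : L.Nonempty) (hLclosed : IsClosed L) (hLconv : Convex ℝ L)
    (g : EuclideanSpace ℝ (Fin n) → ℝ)
    (hg : ∀ x, g x = (volume (K ∩ (x +ᵥ L))).toReal)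
    (a : EuclideanSpace ℝ (Fin n))
    (hpos : 0 < volume (K ∩ (a +ᵥ L)))
    (hfin : volume (K ∩ (a +ᵥ L)) < ⊤) :
    ∀ x₀ ∈ K + -L, ∀ x₁ ∈ K + -L, ∀ t ∈ Icc (0 : ℝ) 1,
      (1 - t) * g x₀ ^ (1 / (n : ℝ)) + t * g x₁ ^ (1 / (n : ℝ))
        ≤ g ((1 - t) • x₀ + t • x₁) ^ (1 / (n : ℝ)) :=
  covariogram_one_div_n_concave_general n K L hKclosed hKconv hLclosed hLconv g hg a hpos hfin
end

section
/- Let n > 1 and let K, L ⊆ ℝⁿ be closed convex sets such that K ∩ L is compact and nonempty. If the boundaries satisfy ∂K ∩ ∂L = ∅, then either L is contained in the interior of K, or K is contained in the interior of L. -/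
/-!
Since `∂K ∩ ∂L = ∅`, every point of `C = K ∩ L` lies in `int K ∪ int L`. As `C` is compact and
convex and `n ≥ 2`, its frontier is connected (homeomorphic to a sphere, or equal to `closure C`
when `int C = ∅`), and it avoids `int C = int K ∩ int L`; so it cannot meet both `int K` and
`int L`. Hence `C ⊆ int K` or `C ⊆ int L`, and convexity spreads this to all of `L`, resp. `K`.
-/

open Set

section Convex

variable {E : Type*}

/-- A segment in `K` from a point of `K ∩ L` to a point outside `L` would cross `∂L` inside `K`. -/
theorem Convex.subset_interior_of_inter_subset_interior [TopologicalSpace E] [AddCommGroup E]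
    [Module ℝ E] [IsTopologicalAddGroup E] [ContinuousSMul ℝ E] {K L : Set E}
    (hK : Convex ℝ K) (hL : IsClosed L) (hne : (K ∩ L).Nonempty) (h : K ∩ L ⊆ interior L) :
    K ⊆ interior L := by
  obtain ⟨x, hxK, hxL⟩ := hne
  intro y hy
  have hseg : segment ℝ x y ⊆ K := hK.segment_subset hxK hy
  have hcover : segment ℝ x y ⊆ interior L ∪ Lᶜ := fun p hp ↦
    (em (p ∈ L)).imp (fun hpL ↦ h ⟨hseg hp, hpL⟩) id
  exact (convex_segment x y).isPreconnected.subset_left_of_subset_union isOpen_interior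
    hL.isOpen_compl (disjoint_compl_right.mono_left interior_subset) hcover
    ⟨x, left_mem_segment ℝ x y, h ⟨hxK, hxL⟩⟩ (right_mem_segment ℝ x y)

theorem Convex.isPreconnected_frontier [NormedAddCommGroup E] [NormedSpace ℝ E]
    (hE : 1 < Module.rank ℝ E) {s : Set E} (hs : Convex ℝ s) (hb : Bornology.IsBounded s) :
    IsPreconnected (frontier s) := by
  rcases (interior s).eq_empty_or_nonempty with hint | hint
  · rw [frontier, hint, sdiff_empty]
    exact hs.closure.isPreconnected
  · obtain ⟨h, -, -, hfr⟩ :=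
      exists_homeomorph_image_interior_closure_frontier_eq_unitBall hs hint hb
    rw [← h.isPreconnected_image, hfr]
    exact isPreconnected_sphere hE 0 1

end Convex

section Topology

variable {X : Type*} [TopologicalSpace X] {K L : Set X}

theorem inter_subset_interior_union_interior (hK : IsClosed K) (hL : IsClosed L)
    (hbd : frontier K ∩ frontier L = ∅) : K ∩ L ⊆ interior K ∪ interior L := by
  rintro x ⟨hxK, hxL⟩
  by_contra hx
  rw [mem_union, not_or] at hx
  exact (eq_empty_iff_forall_notMem.1 hbd x)
    ⟨hK.frontier_eq ▸ ⟨hxK, hx.1⟩, hL.frontier_eq ▸ ⟨hxL, hx.2⟩⟩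

theorem inter_subset_interior_or_of_isPreconnected_frontier (hK : IsClosed K) (hL : IsClosed L)
    (hbd : frontier K ∩ frontier L = ∅) (hC : IsPreconnected (frontier (K ∩ L))) :
    K ∩ L ⊆ interior K ∨ K ∩ L ⊆ interior L := by
  have hcover := inter_subset_interior_union_interior hK hL hbd
  have hfrC : frontier (K ∩ L) = (K ∩ L) \ (interior K ∩ interior L) := by
    rw [(hK.inter hL).frontier_eq, interior_inter]
  by_contra! hnot
  obtain ⟨a, haC, haK⟩ := not_subset.1 hnot.1
  obtain ⟨b, hbC, hbL⟩ := not_subset.1 hnot.2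
  obtain ⟨x, hxC, hxK, hxL⟩ := hC (interior K) (interior L) isOpen_interior isOpen_interior
    (hfrC ▸ fun x hx ↦ hcover hx.1)
    ⟨b, hfrC ▸ ⟨hbC, fun h ↦ hbL h.2⟩, (hcover hbC).resolve_right hbL⟩
    ⟨a, hfrC ▸ ⟨haC, fun h ↦ haK h.1⟩, (hcover haC).resolve_left haK⟩
  exact (hfrC ▸ hxC).2 ⟨hxK, hxL⟩

end Topology

/-- Lemma 2.4 (Intersection of boundaries): if `K, L` are closed convex sets in `ℝⁿ`, `n > 1`,
with `K ∩ L` compact and nonempty, and `∂K ∩ ∂L = ∅`, then one of the sets contains the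
other in its interior. -/
theorem boundary_intersection
    (n : ℕ) (hn : 1 < n)
    (K L : Set (EuclideanSpace ℝ (Fin n)))
    (hKclosed : IsClosed K) (hKconv : Convex ℝ K)
    (hLclosed : IsClosed L) (hLconv : Convex ℝ L)
    (hcomp : IsCompact (K ∩ L)) (hne : (K ∩ L).Nonempty)
    (hbd : frontier K ∩ frontier L = ∅) :
    L ⊆ interior K ∨ K ⊆ interior L := by
  have hrank : 1 < Module.rank ℝ (EuclideanSpace ℝ (Fin n)) := by
    rw [← Module.finrank_eq_rank, finrank_euclideanSpace_fin]
    exact_mod_cast hn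
  have hfr : IsPreconnected (frontier (K ∩ L)) :=
    (hKconv.inter hLconv).isPreconnected_frontier hrank hcomp.isBounded
  rcases inter_subset_interior_or_of_isPreconnected_frontier hKclosed hLclosed hbd hfr with hK | hL
  · left
    exact hLconv.subset_interior_of_inter_subset_interior hKclosed (inter_comm K L ▸ hne)
      (inter_comm K L ▸ hK)
  · exact Or.inr (hKconv.subset_interior_of_inter_subset_interior hLclosed hne hL)
end

section
/- Let K, L ⊆ ℝⁿ be closed convex sets with K ∩ L ≠ ∅, and let v ∈ ℝⁿ with v ≠ 0. If z + v ∈ K and z − v ∈ K for every z ∈ K ∩ L, then K ∩ L = K' ∩ L, where K' := {x + tv : x ∈ K, t ∈ ℝ} is the cylinder in the direction v generated by K. -/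
/-!
Fix `w ∈ K ∩ L`, a point `x ∈ K` and `t ≥ 0` with `y = x + t • v ∈ L`, and walk along the
segment from `w` to `y`, which lies in `L`. If the point `z` at parameter `s < 1` is in `K`, then
`z ∈ K ∩ L`, so `z + v ∈ K`, and the convex combination of `z + v` and `x` with weights
`t / (t + 1)` and `1 / (t + 1)` is the point of the segment at the larger parameter
`(s * t + 1) / (t + 1)`. As `K` is closed, the parameters of points in `K` form a closed subset of
`[0, 1]` containing `0` and having no largest element below `1`, so `y` itself lies in `K`.
For `t ≤ 0` the same argument applies to `-v`.
-/

open Set AffineMap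

theorem IsClosed.mem_of_forall_lt_exists_gt {S : Set ℝ} {a : ℝ} (hS : IsClosed S)
    (hne : S.Nonempty) (hle : ∀ s ∈ S, s ≤ a) (hstep : ∀ s ∈ S, s < a → ∃ s' ∈ S, s < s') :
    a ∈ S := by
  have hbdd : BddAbove S := ⟨a, hle⟩
  have hsup : sSup S ∈ S := hS.csSup_mem hne hbdd
  rcases (hle _ hsup).eq_or_lt with h | h
  · rwa [← h]
  · obtain ⟨s', hs', hlt⟩ := hstep _ hsup h
    exact absurd (le_csSup hbdd hs') hlt.not_ge

section

variable {E : Type*} [AddCommGroup E] [Module ℝ E] {K L : Set E} {v w x : E} {t s : ℝ}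

theorem Convex.lineMap_mem_of_forall_add_mem (hK : Convex ℝ K) (hL : Convex ℝ L)
    (hv : ∀ z ∈ K ∩ L, z + v ∈ K) (hw : w ∈ K ∩ L) (hx : x ∈ K) (hy : x + t • v ∈ L)
    (ht : 0 ≤ t) (hs : s ∈ Icc (0 : ℝ) 1) (hsK : lineMap w (x + t • v) s ∈ K) :
    lineMap w (x + t • v) ((s * t + 1) / (t + 1)) ∈ K := by
  have hzL : lineMap w (x + t • v) s ∈ L := hL.lineMap_mem hw.2 hy hs
  have ht1 : 0 < t + 1 := by linarith
  have hcombo : lineMap w (x + t • v) ((s * t + 1) / (t + 1)) =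
      (t / (t + 1)) • (lineMap w (x + t • v) s + v) + (1 / (t + 1)) • x := by
    simp only [lineMap_apply_module]
    match_scalars <;> field_simp
    ring
  rw [hcombo]
  exact hK (hv _ ⟨hsK, hzL⟩) hx (by positivity) (by positivity) (by field_simp)

variable [TopologicalSpace E] [IsTopologicalAddGroup E] [ContinuousSMul ℝ E]

theorem Convex.add_smul_mem_of_forall_add_mem (hKc : IsClosed K) (hK : Convex ℝ K)
    (hL : Convex ℝ L) (hv : ∀ z ∈ K ∩ L, z + v ∈ K) (hw : w ∈ K ∩ L) (hx : x ∈ K)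
    (hy : x + t • v ∈ L) (ht : 0 ≤ t) : x + t • v ∈ K := by
  set S : Set ℝ := Icc 0 1 ∩ lineMap w (x + t • v) ⁻¹' K
  have hS : IsClosed S := isClosed_Icc.inter (hKc.preimage lineMap_continuous)
  have h0 : (0 : ℝ) ∈ S := ⟨left_mem_Icc.2 zero_le_one, by simpa using hw.1⟩
  have h1 : (1 : ℝ) ∈ S := by
    refine hS.mem_of_forall_lt_exists_gt ⟨0, h0⟩ (fun s hs => hs.1.2) fun s ⟨hs, hsK⟩ hs1 => ?_
    have ht1 : 0 < t + 1 := by linarith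
    refine ⟨(s * t + 1) / (t + 1), ⟨⟨div_nonneg (by nlinarith [hs.1]) ht1.le, ?_⟩, ?_⟩, ?_⟩
    · rw [div_le_one ht1]; nlinarith [hs.2]
    · exact hK.lineMap_mem_of_forall_add_mem hL hv hw hx hy ht hs hsK
    · rw [lt_div_iff₀ ht1]; nlinarith
  simpa using h1.2

end

theorem cylinder_lemma_general
    (n : ℕ)
    (K L : Set (EuclideanSpace ℝ (Fin n)))
    (hKclosed : IsClosed K) (hKconv : Convex ℝ K)
    (hLconv : Convex ℝ L)
    (hne : (K ∩ L).Nonempty)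
    (v : EuclideanSpace ℝ (Fin n))
    (hseg : ∀ z ∈ K ∩ L, z + v ∈ K ∧ z - v ∈ K) :
    K ∩ L = {y | ∃ x ∈ K, ∃ t : ℝ, y = x + t • v} ∩ L := by
  obtain ⟨w, hw⟩ := hne
  refine Subset.antisymm (fun y hy => ⟨⟨y, hy.1, 0, by simp⟩, hy.2⟩) ?_
  rintro _ ⟨⟨x, hx, t, rfl⟩, hyL⟩
  refine ⟨?_, hyL⟩
  rcases le_total 0 t with ht | ht
  · exact hKconv.add_smul_mem_of_forall_add_mem hKclosed hLconv (fun z hz => (hseg z hz).1)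
      hw hx hyL ht
  · have hneg : x + (-t) • -v ∈ K :=
      hKconv.add_smul_mem_of_forall_add_mem hKclosed hLconv
        (fun z hz => by simpa [sub_eq_add_neg] using (hseg z hz).2) hw hx
        (by rwa [neg_smul_neg]) (neg_nonneg.2 ht)
    rwa [neg_smul_neg] at hneg

/-- Lemma 4.1 (cylinder lemma): if `z ± v ∈ K` for every `z ∈ K ∩ L`, then
`K ∩ L = K' ∩ L`, where `K'` is the cylinder in the direction `v` generated by `K`. -/
theorem cylinder_lemma
    (n : ℕ)
    (K L : Set (EuclideanSpace ℝ (Fin n)))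
    (hKclosed : IsClosed K) (hKconv : Convex ℝ K)
    (hLclosed : IsClosed L) (hLconv : Convex ℝ L)
    (hne : (K ∩ L).Nonempty)
    (v : EuclideanSpace ℝ (Fin n)) (hv : v ≠ 0)
    (hseg : ∀ z ∈ K ∩ L, z + v ∈ K ∧ z - v ∈ K) :
    K ∩ L = {y | ∃ x ∈ K, ∃ t : ℝ, y = x + t • v} ∩ L :=
  cylinder_lemma_general n K L hKclosed hKconv hLconv hne v hseg
end

section
/- Let K, L ⊆ ℝⁿ be closed convex sets with K ∩ L ≠ ∅, let v ∈ ℝⁿ and λ ∈ (0,1]. If z + (λz + v) ∈ K and z − (λz + v) ∈ K for every z ∈ K ∩ L, then K ∩ L = K'' ∩ L, where K'' := {−(1/λ)v + t(x + (1/λ)v) : x ∈ K, t ≥ 0} is the convex cone with vertex −(1/λ)v generated by K. -/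
/-!
Put `p = -(1/λ) v`, so that `z ± (λz + v) = p + (1 ± λ)(z - p)`: the homotheties with centre `p`
and ratios `c = 1 ± λ` map `K ∩ L` into `K`. Let `y = p + t(x - p) ∈ L` with `x ∈ K`. Choosing
`c = 1 + λ` if `t ≥ 1` and `c = 1 - λ` if `t ≤ 1`, the point `y` lies on the segment from `x` to
`p + c(y - p)`, so `w ↦ (1 - μ) x + μ (p + c(w - p))` is a homothety with centre `y` and ratio
`β = cμ ∈ [0, 1)` mapping `K ∩ L` into `K`. Its iterates from a point `q ∈ K ∩ L` stay on the
segment `[q, y] ⊆ L`, hence in `K ∩ L`, and converge to `y`; as `K` is closed, `y ∈ K`.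
-/

open Set Filter Topology AffineMap

section

variable {E : Type*} [AddCommGroup E] [Module ℝ E]

theorem IsClosed.mem_of_homothety_mem [TopologicalSpace E] [ContinuousAdd E] [ContinuousSMul ℝ E]
    {K L : Set E} (hK : IsClosed K) (hL : Convex ℝ L) {y q : E} (hy : y ∈ L) (hq : q ∈ K ∩ L)
    {β : ℝ} (hβ : β ∈ Ico 0 1) (h : ∀ w ∈ K ∩ L, homothety y β w ∈ K) : y ∈ K := by
  have hiter : ∀ k : ℕ, homothety y (β ^ k) q ∈ K ∩ L := by
    intro k
    induction k with
    | zero => simpa using hq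
    | succ k ih =>
      rw [pow_succ', homothety_mul_apply]
      exact ⟨h _ ih, hL.lineMap_mem hy ih.2 ⟨hβ.1, hβ.2.le⟩⟩
  have hlim : Tendsto (fun k : ℕ ↦ homothety y (β ^ k) q) atTop (𝓝 y) := by
    simpa [homothety_apply] using
      ((tendsto_pow_atTop_nhds_zero_of_lt_one hβ.1 hβ.2).smul_const (q - y)).add_const y
  exact hK.mem_of_tendsto hlim (Eventually.of_forall fun k ↦ (hiter k).1)

theorem exists_lineMap_homothety_eq_homothety (p x : E) {c t : ℝ} (hc : 0 ≤ c) (hc1 : c ≠ 1)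
    (ht : 0 ≤ t) (hct : 0 ≤ (c - 1) * (t - 1)) :
    ∃ μ ∈ Icc (0 : ℝ) 1, ∃ β ∈ Ico (0 : ℝ) 1,
      ∀ w, lineMap x (homothety p c w) μ = homothety (homothety p t x) β w := by
  -- `(ct - 1)(c - 1) = c (c - 1)(t - 1) + (c - 1)²`; multiplying by it settles all signs at once.
  have he : 0 < (c * t - 1) * (c - 1) := by
    nlinarith [mul_nonneg hc hct, sq_pos_of_ne_zero (sub_ne_zero.2 hc1)]
  obtain ⟨μ, hμ⟩ : ∃ μ : ℝ, μ * (c * t - 1) = t - 1 :=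
    ⟨_, div_mul_cancel₀ _ (left_ne_zero_of_mul he.ne')⟩
  have hμ0 : 0 ≤ μ :=
    nonneg_of_mul_nonneg_left (by linear_combination (1 - c) * hμ + hct) he
  refine ⟨μ, ⟨hμ0, ?_⟩, c * μ, ⟨mul_nonneg hc hμ0, ?_⟩, fun w ↦ ?_⟩
  · have : 0 ≤ (1 - μ) * ((c * t - 1) * (c - 1)) := by
      linear_combination (c - 1) * hμ + t * sq_nonneg (c - 1)
    linarith [nonneg_of_mul_nonneg_left this he]
  · have : 0 < (1 - c * μ) * ((c * t - 1) * (c - 1)) := by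
      linear_combination (c ^ 2 - c) * hμ + sq_pos_of_ne_zero (sub_ne_zero.2 hc1)
    linarith [pos_of_mul_pos_left this he.le]
  · simp only [lineMap_apply_module, homothety_apply, vsub_eq_sub, vadd_eq_add]
    match_scalars
    · linear_combination hμ
    · ring
    · linear_combination -hμ

theorem homothety_mem_of_forall_homothety_mem [TopologicalSpace E] [ContinuousAdd E]
    [ContinuousSMul ℝ E] {K L : Set E} (hKclosed : IsClosed K) (hKconv : Convex ℝ K)
    (hLconv : Convex ℝ L) (hne : (K ∩ L).Nonempty) {p : E} {c : ℝ} (hc : 0 ≤ c) (hc1 : c ≠ 1)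
    (hK : ∀ w ∈ K ∩ L, homothety p c w ∈ K) {x : E} (hx : x ∈ K) {t : ℝ} (ht : 0 ≤ t)
    (hct : 0 ≤ (c - 1) * (t - 1)) (hy : homothety p t x ∈ L) : homothety p t x ∈ K := by
  obtain ⟨q, hq⟩ := hne
  obtain ⟨μ, hμ, β, hβ, hmap⟩ := exists_lineMap_homothety_eq_homothety p x hc hc1 ht hct
  refine hKclosed.mem_of_homothety_mem hLconv hy hq hβ fun w hw ↦ ?_
  rw [← hmap]
  exact hKconv.lineMap_mem hx (hK w hw) hμ

end

theorem cone_lemma_general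
    (n : ℕ)
    (K L : Set (EuclideanSpace ℝ (Fin n)))
    (hKclosed : IsClosed K) (hKconv : Convex ℝ K)
    (hLconv : Convex ℝ L)
    (hne : (K ∩ L).Nonempty)
    (v : EuclideanSpace ℝ (Fin n)) (l : ℝ) (hl : l ∈ Ioc (0 : ℝ) 1)
    (hseg : ∀ z ∈ K ∩ L, z + (l • z + v) ∈ K ∧ z - (l • z + v) ∈ K) :
    K ∩ L =
      {y | ∃ x ∈ K, ∃ t : ℝ, 0 ≤ t ∧
          y = -((1 / l) • v) + t • (x + (1 / l) • v)} ∩ L := by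
  obtain ⟨hl0, hl1⟩ := hl
  have hcone : ∀ (t : ℝ) x,
      -((1 / l) • v) + t • (x + (1 / l) • v) = homothety (-((1 / l) • v)) t x := by
    intro t x
    simp only [homothety_apply, vsub_eq_sub, vadd_eq_add]
    module
  have hscale : ∀ (s : ℝ) z, homothety (-((1 / l) • v)) (1 + s * l) z = z + s • (l • z + v) := by
    intro s z
    simp only [homothety_apply, vsub_eq_sub, vadd_eq_add]
    match_scalars
    · ring
    · field_simp
      ring
  ext y
  simp only [mem_inter_iff, mem_ofPred_eq, hcone]
  refine ⟨fun ⟨hyK, hyL⟩ ↦ ⟨⟨y, hyK, 1, zero_le_one, by simp⟩, hyL⟩, ?_⟩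
  rintro ⟨⟨x, hx, t, ht, rfl⟩, hyL⟩
  refine ⟨?_, hyL⟩
  rcases le_total 1 t with h1t | ht1
  · refine homothety_mem_of_forall_homothety_mem hKclosed hKconv hLconv hne (by linarith)
      (by linarith : 1 + 1 * l ≠ 1) (fun w hw ↦ ?_) hx ht (by nlinarith) hyL
    rw [hscale, one_smul]
    exact (hseg w hw).1
  · refine homothety_mem_of_forall_homothety_mem hKclosed hKconv hLconv hne (by linarith)
      (by linarith : 1 + -1 * l ≠ 1) (fun w hw ↦ ?_) hx ht (by nlinarith) hyL
    rw [hscale, neg_one_smul, ← sub_eq_add_neg]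
    exact (hseg w hw).2

/-- Lemma 5.1 (cone lemma): if `z ± (λz + v) ∈ K` for every `z ∈ K ∩ L`, then
`K ∩ L = K'' ∩ L`, where `K''` is the convex cone with vertex `-(1/λ)v` generated by `K`. -/
theorem cone_lemma
    (n : ℕ)
    (K L : Set (EuclideanSpace ℝ (Fin n)))
    (hKclosed : IsClosed K) (hKconv : Convex ℝ K)
    (hLclosed : IsClosed L) (hLconv : Convex ℝ L)
    (hne : (K ∩ L).Nonempty)
    (v : EuclideanSpace ℝ (Fin n)) (l : ℝ) (hl : l ∈ Ioc (0 : ℝ) 1)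
    (hseg : ∀ z ∈ K ∩ L, z + (l • z + v) ∈ K ∧ z - (l • z + v) ∈ K) :
    K ∩ L =
      {y | ∃ x ∈ K, ∃ t : ℝ, 0 ≤ t ∧
          y = -((1 / l) • v) + t • (x + (1 / l) • v)} ∩ L :=
  cone_lemma_general n K L hKclosed hKconv hLconv hne v l hl hseg
end

section
/- Let n ≥ 1 and let K, L ⊆ ℝⁿ be nonempty closed convex sets. If there exists a ∈ ℝⁿ with 0 < g_{K,L}(a) < ∞, then g_{K,L}(x) < ∞ for every x ∈ ℝⁿ. -/
/-!
Write `D x = K ∩ (x +ᵥ L)`. Convexity of `K` and `L` gives `s • D y + t • D z ⊆ D (s • y + t • z)`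
for `s, t ≥ 0`, `s + t = 1`, so if `D y` has infinite volume and `D z` is nonempty, then `D` has
infinite volume at every point of the half-open segment `(z, y]`. A convex set of positive volume
has an interior point, so `D a` forces `D z` to be nonempty for all `z` near `a`; taking such a `z`
on the ray from `x` through `a`, beyond `a`, an infinite `g_{K,L}(x)` would make `g_{K,L}(a)`
infinite.
-/

open MeasureTheory Set Pointwise Filter Topology

section Convex

variable {E : Type*} [AddCommGroup E] [Module ℝ E] {K L : Set E}

theorem Convex.combo_inter_vadd_subset (hK : Convex ℝ K) (hL : Convex ℝ L) (y z : E)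
    {a b : ℝ} (ha : 0 ≤ a) (hb : 0 ≤ b) (hab : a + b = 1) :
    a • (K ∩ (y +ᵥ L)) + b • (K ∩ (z +ᵥ L)) ⊆ K ∩ ((a • y + b • z) +ᵥ L) := by
  rintro _ ⟨_, ⟨u, ⟨huK, l, hl, rfl⟩, rfl⟩, _, ⟨v, ⟨hvK, l', hl', rfl⟩, rfl⟩, rfl⟩
  refine ⟨hK huK hvK ha hb hab, a • l + b • l', hL hl hl' ha hb hab, ?_⟩
  simp only [vadd_eq_add]
  module

end Convex

section Measure

variable {E : Type*} [NormedAddCommGroup E] [NormedSpace ℝ E] [MeasurableSpace E] [BorelSpace E]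
  [FiniteDimensional ℝ E] (μ : Measure E) [μ.IsAddHaarMeasure]

theorem Convex.interior_nonempty_of_addHaar_pos {s : Set E} (hs : Convex ℝ s) (hpos : 0 < μ s) :
    (interior s).Nonempty := by
  rw [nonempty_iff_ne_empty]
  intro hint
  have hfrontier : s ⊆ frontier s := by
    rw [frontier, hint, sdiff_empty]
    exact subset_closure
  exact hpos.ne' (measure_mono_null hfrontier (hs.addHaar_frontier μ))

theorem addHaar_inter_vadd_combo_eq_top {K L : Set E} (hK : Convex ℝ K) (hL : Convex ℝ L)
    {y z : E} (hy : μ (K ∩ (y +ᵥ L)) = ⊤) {c : E} (hc : c ∈ K ∩ (z +ᵥ L))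
    {a b : ℝ} (ha : 0 < a) (hb : 0 ≤ b) (hab : a + b = 1) :
    μ (K ∩ ((a • y + b • z) +ᵥ L)) = ⊤ := by
  have hsub : (b • c) +ᵥ a • (K ∩ (y +ᵥ L)) ⊆ K ∩ ((a • y + b • z) +ᵥ L) := by
    rintro _ ⟨w, hw, rfl⟩
    convert hK.combo_inter_vadd_subset hL y z ha.le hb hab
      (add_mem_add hw (smul_mem_smul_set hc)) using 1
    exact add_comm _ _
  refine top_le_iff.mp (le_trans (le_of_eq ?_) (measure_mono hsub))
  rw [measure_vadd, Measure.addHaar_smul, hy, ENNReal.mul_top]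
  simp [ha.ne']

end Measure

theorem mem_interior_sub_of_mem_interior_of_mem_vadd {E : Type*} [AddCommGroup E] [TopologicalSpace E]
    [IsTopologicalAddGroup E] {K L : Set E} {p a : E} (hp : p ∈ interior K) (hpL : p ∈ a +ᵥ L) :
    a ∈ interior (K - L) := by
  obtain ⟨l, hl, rfl⟩ := hpL
  refine interior_mono (sub_subset_sub_right interior_subset) ?_
  rw [isOpen_interior.sub_right.interior_eq]
  exact ⟨a +ᵥ l, hp, l, hl, by simp [vadd_eq_add]⟩

theorem covariogram_finite_everywhere_general
    (n : ℕ)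
    (K L : Set (EuclideanSpace ℝ (Fin n)))
    (hKconv : Convex ℝ K)
    (hLconv : Convex ℝ L)
    (a : EuclideanSpace ℝ (Fin n))
    (hpos : 0 < volume (K ∩ (a +ᵥ L)))
    (hfin : volume (K ∩ (a +ᵥ L)) < ⊤) :
    ∀ x : EuclideanSpace ℝ (Fin n), volume (K ∩ (x +ᵥ L)) < ⊤ := by
  intro x
  by_contra hx
  rw [not_lt, top_le_iff] at hx
  obtain ⟨p, hp⟩ := (hKconv.inter (hLconv.vadd a)).interior_nonempty_of_addHaar_pos volume hpos
  have ha : K - L ∈ 𝓝 a := mem_interior_iff_mem_nhds.mp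
    (mem_interior_sub_of_mem_interior_of_mem_vadd (interior_mono inter_subset_left hp) (interior_subset hp).2)
  have hray : Tendsto (fun s : ℝ => a - s • (x - a)) (𝓝[>] 0) (𝓝 a) := by
    refine tendsto_nhdsWithin_of_tendsto_nhds (Continuous.tendsto' (by fun_prop) _ _ ?_)
    simp
  obtain ⟨s, ⟨k, hk, l, hl, hkl⟩, hs : 0 < s⟩ :=
    ((hray.eventually ha).and self_mem_nhdsWithin).exists
  have hcombo := addHaar_inter_vadd_combo_eq_top volume hKconv hLconv hx
    (z := a - s • (x - a)) (c := k) ⟨hk, l, hl, by rw [← hkl]; exact sub_add_cancel k l⟩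
    (a := s / (1 + s)) (b := 1 / (1 + s)) (by positivity) (by positivity) (by field_simp; ring)
  have hmid : (s / (1 + s)) • x + (1 / (1 + s)) • (a - s • (x - a)) = a := by
    match_scalars <;> field_simp <;> ring
  rw [hmid] at hcombo
  exact hfin.ne hcombo

/-- Standing hypothesis consequence: if `0 < g_{K,L}(a) < ∞` for some `a`, then
`g_{K,L}(x) < ∞` for every `x`. -/
theorem covariogram_finite_everywhere
    (n : ℕ) (hn : 1 ≤ n)
    (K L : Set (EuclideanSpace ℝ (Fin n)))
    (hKne : K.Nonempty) (hKclosed : IsClosed K) (hKconv : Convex ℝ K)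
    (hLne : L.Nonempty) (hLclosed : IsClosed L) (hLconv : Convex ℝ L)
    (a : EuclideanSpace ℝ (Fin n))
    (hpos : 0 < volume (K ∩ (a +ᵥ L)))
    (hfin : volume (K ∩ (a +ᵥ L)) < ⊤) :
    ∀ x : EuclideanSpace ℝ (Fin n), volume (K ∩ (x +ᵥ L)) < ⊤ :=
  covariogram_finite_everywhere_general n K L hKconv hLconv a hpos hfin
end
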